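/- Let (Jₜ) be a pure-jump process whose sum of squared jumps Σ_{s≤t}(ΔJ_s)² is finite a.s. Suppose that along a subsequence n_k with h_k = T/n_k, almost surely Σ_{j≤⌊t/h_k⌋}(Δ_j J)² → Σ_{s∈[0,t]}(ΔJ_s)² uniformly in t ∈ [0,T]. Then almost surely: for every δ > 0 there exists k₀ such that for all k ≥ k₀ and all j = 1,…,n_k, if (Δ_j J)² ≤ 4 r(h_k) then every individual jump in (t_{j−1}, t_j] satisfies (ΔJ_s)² ≤ 4 r(h_k) + δ. -/

import Mathlib

open Filter Topology MeasureTheory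

/-!
At the grid points `t_j = j h` the discretized quadratic variation increases by exactly
`(Δ_j J)²` from `t_{j-1}` to `t_j`. Once it is uniformly `δ/2`-close to `Q`, the increment
`Q(t_j) - Q(t_{j-1})`, which dominates every squared jump in `(t_{j-1}, t_j]`, exceeds
`(Δ_j J)²` by less than `δ`.
-/

noncomputable def discreteQuadVar (X : ℝ → ℝ) (h t : ℝ) : ℝ :=
  ∑ j ∈ Finset.range ⌊t / h⌋₊, (X ((j + 1) * h) - X (j * h)) ^ 2

lemma discreteQuadVar_natCast_mul (X : ℝ → ℝ) {h : ℝ} (hh : h ≠ 0) (m : ℕ) :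
    discreteQuadVar X h (m * h) = ∑ j ∈ Finset.range m, (X ((j + 1) * h) - X (j * h)) ^ 2 := by
  rw [discreteQuadVar, mul_div_cancel_right₀ _ hh, Nat.floor_natCast]

lemma discreteQuadVar_sub_of_one_le (X : ℝ → ℝ) {h : ℝ} (hh : h ≠ 0) {j : ℕ} (hj : 1 ≤ j) :
    discreteQuadVar X h (j * h) - discreteQuadVar X h ((j - 1) * h) =
      (X (j * h) - X ((j - 1) * h)) ^ 2 := by
  obtain ⟨m, rfl⟩ := Nat.exists_eq_add_of_le' hj
  have hm : ((m + 1 : ℕ) : ℝ) - 1 = m := by push_cast; ring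
  rw [hm, discreteQuadVar_natCast_mul X hh, discreteQuadVar_natCast_mul X hh,
    Finset.sum_range_succ, add_sub_cancel_left]
  push_cast
  rfl

lemma TendstoUniformlyOn.eventually_sub_lt_sub_add {ι α : Type*} {F : ι → α → ℝ} {f : α → ℝ}
    {p : Filter ι} {s : Set α} (hF : TendstoUniformlyOn F f p s) {ε : ℝ} (hε : 0 < ε) :
    ∀ᶠ n in p, ∀ a ∈ s, ∀ b ∈ s, f b - f a < F n b - F n a + ε := by
  filter_upwards [Metric.tendstoUniformlyOn_iff.mp hF (ε / 2) (half_pos hε)] with n hn a ha b hb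
  have hna := abs_lt.mp (Real.dist_eq _ _ ▸ hn a ha)
  have hnb := abs_lt.mp (Real.dist_eq _ _ ▸ hn b hb)
  linarith [hna.1, hnb.2]

lemma mul_div_natCast_mem_Icc {T x : ℝ} (hT : 0 ≤ T) {n : ℕ} (hn : 0 < n) (hx₀ : 0 ≤ x)
    (hxn : x ≤ n) : x * (T / n) ∈ Set.Icc 0 T := by
  have hn' : (0 : ℝ) < n := Nat.cast_pos.mpr hn
  refine ⟨by positivity, ?_⟩
  calc x * (T / n) ≤ n * (T / n) := by gcongr
    _ = T := mul_div_cancel₀ T hn'.ne'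

theorem small_increment_controls_individual_jumps_general
    {Ω : Type*} [MeasurableSpace Ω] (P : Measure Ω)
    (T : ℝ) (hT : 0 < T)
    (J : Ω → ℝ → ℝ) (jump : Ω → ℝ → ℝ) (Q : Ω → ℝ → ℝ) (r : ℝ → ℝ)
    (hQjump : ∀ ω, ∀ u v s : ℝ, 0 ≤ u → v ≤ T → u < s → s ≤ v →
      (jump ω s) ^ 2 ≤ Q ω v - Q ω u)
    (nk : ℕ → ℕ) (hnk1 : ∀ k, 0 < nk k)
    (hconv : ∀ᵐ ω ∂P, TendstoUniformlyOn
      (fun k t => ∑ j ∈ Finset.range ⌊t / (T / nk k)⌋₊,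
        (J ω (((j : ℝ) + 1) * (T / nk k)) - J ω ((j : ℝ) * (T / nk k))) ^ 2)
      (fun t => Q ω t) atTop (Set.Icc 0 T)) :
    ∀ᵐ ω ∂P, ∀ δ > (0:ℝ), ∃ k₀ : ℕ, ∀ k ≥ k₀, ∀ j : ℕ, 1 ≤ j → j ≤ nk k →
      (J ω ((j : ℝ) * (T / nk k)) - J ω (((j : ℝ) - 1) * (T / nk k))) ^ 2
          ≤ 4 * r (T / nk k) →
      ∀ s : ℝ, ((j : ℝ) - 1) * (T / nk k) < s → s ≤ (j : ℝ) * (T / nk k) →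
        (jump ω s) ^ 2 ≤ 4 * r (T / nk k) + δ := by
  filter_upwards [hconv] with ω hc δ hδ
  replace hc : TendstoUniformlyOn (fun k => discreteQuadVar (J ω) (T / nk k)) (Q ω) atTop
    (Set.Icc 0 T) := hc
  obtain ⟨k₀, hk₀⟩ := eventually_atTop.mp (hc.eventually_sub_lt_sub_add hδ)
  refine ⟨k₀, fun k hk j hj₁ hjn hsmall s hs₁ hs₂ => ?_⟩
  have hj₁' : (1 : ℝ) ≤ j := Nat.one_le_cast.mpr hj₁
  have hjn' : (j : ℝ) ≤ nk k := Nat.cast_le.mpr hjn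
  have ha := mul_div_natCast_mem_Icc hT.le (hnk1 k) (x := j - 1) (by linarith) (by linarith)
  have hb := mul_div_natCast_mem_Icc hT.le (hnk1 k) (x := j) (by linarith) hjn'
  have hmesh : T / nk k ≠ 0 := (div_pos hT (Nat.cast_pos.mpr (hnk1 k))).ne'
  calc jump ω s ^ 2
      ≤ Q ω (j * (T / nk k)) - Q ω ((j - 1) * (T / nk k)) := hQjump ω _ _ s ha.1 hb.2 hs₁ hs₂
    _ ≤ (J ω (j * (T / nk k)) - J ω ((j - 1) * (T / nk k))) ^ 2 + δ := by
      rw [← discreteQuadVar_sub_of_one_le (J ω) hmesh hj₁]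
      exact (hk₀ k hk _ ha _ hb).le
    _ ≤ 4 * r (T / nk k) + δ := by linarith

/-- Lemma 10, part 1: if a.s., along the subsequence `n_k` (with `h_k = T/n_k`), the
discretized sum of squared increments of the pure-jump process `J` converges uniformly
on `[0,T]` to the cumulative sum of squared jumps `Q`, then a.s. for every `δ > 0` and
all sufficiently large `k`: whenever `(Δ_j J)² ≤ 4·r(h_k)`, every individual jump in
`(t_{j−1}, t_j]` satisfies `(ΔJ_s)² ≤ 4·r(h_k) + δ`. -/
theorem small_increment_controls_individual_jumps
    {Ω : Type*} [MeasurableSpace Ω] (P : Measure Ω) [IsProbabilityMeasure P]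
    (T : ℝ) (hT : 0 < T)
    (J : Ω → ℝ → ℝ) (jump : Ω → ℝ → ℝ) (Q : Ω → ℝ → ℝ) (r : ℝ → ℝ)
    (hQfin : ∀ᵐ ω ∂P, ∀ t ∈ Set.Icc (0:ℝ) T, 0 ≤ Q ω t)
    (hQjump : ∀ ω, ∀ u v s : ℝ, 0 ≤ u → v ≤ T → u < s → s ≤ v →
      (jump ω s) ^ 2 ≤ Q ω v - Q ω u)
    (nk : ℕ → ℕ) (hnk : StrictMono nk) (hnk1 : ∀ k, 0 < nk k)
    (hconv : ∀ᵐ ω ∂P, TendstoUniformlyOn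
      (fun k t => ∑ j ∈ Finset.range ⌊t / (T / nk k)⌋₊,
        (J ω (((j : ℝ) + 1) * (T / nk k)) - J ω ((j : ℝ) * (T / nk k))) ^ 2)
      (fun t => Q ω t) atTop (Set.Icc 0 T)) :
    ∀ᵐ ω ∂P, ∀ δ > (0:ℝ), ∃ k₀ : ℕ, ∀ k ≥ k₀, ∀ j : ℕ, 1 ≤ j → j ≤ nk k →
      (J ω ((j : ℝ) * (T / nk k)) - J ω (((j : ℝ) - 1) * (T / nk k))) ^ 2
          ≤ 4 * r (T / nk k) →
      ∀ s : ℝ, ((j : ℝ) - 1) * (T / nk k) < s → s ≤ (j : ℝ) * (T / nk k) →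
        (jump ω s) ^ 2 ≤ 4 * r (T / nk k) + δ :=
  small_increment_controls_individual_jumps_general P T hT J jump Q r hQjump nk hnk1 hconv
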